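/- arXiv:cond-mat/0104295 — 3 statements merged into one kernel-verified Lean document; each statement's English description precedes it below -/
import Mathlib

section
/- Let α ∈ (0,1) be fixed, X a real-valued random variable with E[X⁻] < ∞, and (X₁, X₂, …) an independent sequence of random variables each with the same distribution as X. For each n, let X_{1:n} ≤ … ≤ X_{n:n} denote the order statistics of (X₁, …, Xₙ). Then with probability 1, lim_{n→∞} ( Σ_{i=1}^{⌊nα⌋} X_{i:n} ) / ⌊nα⌋ = TM_α(X), where ⌊·⌋ denotes the integer part. -/
open MeasureTheory ProbabilityTheory Filter
open scoped Classical

noncomputable section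

variable {Ω : Type*} [MeasurableSpace Ω]

/-- Lower α-quantile: inf {x | P[X ≤ x] ≥ α}. -/
def lowerQuantile (P : Measure Ω) (X : Ω → ℝ) (α : ℝ) : ℝ :=
  sInf {x : ℝ | α ≤ (P {ω | X ω ≤ x}).toReal}

/-- Upper α-quantile: inf {x | P[X ≤ x] > α}. -/
def upperQuantile (P : Measure Ω) (X : Ω → ℝ) (α : ℝ) : ℝ :=
  sInf {x : ℝ | α < (P {ω | X ω ≤ x}).toReal}

/-- α-tail mean. -/
def tailMean (P : Measure Ω) (X : Ω → ℝ) (α : ℝ) : ℝ :=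
  α⁻¹ * ((∫ ω in {ω | X ω ≤ lowerQuantile P X α}, X ω ∂P)
    + lowerQuantile P X α * (α - (P {ω | X ω ≤ lowerQuantile P X α}).toReal))

/-- Expected Shortfall. -/
def ES (P : Measure Ω) (X : Ω → ℝ) (α : ℝ) : ℝ := - tailMean P X α

/-- Conditional expectation given an event: E[X | A] = E[X·1_A] / P[A]. -/
def condExpEvent (P : Measure Ω) (X : Ω → ℝ) (A : Set Ω) : ℝ :=
  (∫ ω in A, X ω ∂P) / (P A).toReal

/-- Lower tail conditional expectation. -/
def TCElow (P : Measure Ω) (X : Ω → ℝ) (α : ℝ) : ℝ :=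
  - condExpEvent P X {ω | X ω ≤ lowerQuantile P X α}

/-- Upper tail conditional expectation. -/
def TCEup (P : Measure Ω) (X : Ω → ℝ) (α : ℝ) : ℝ :=
  - condExpEvent P X {ω | X ω ≤ upperQuantile P X α}

/-- Worst conditional expectation. -/
def WCE (P : Measure Ω) (X : Ω → ℝ) (α : ℝ) : ℝ :=
  - sInf {y : ℝ | ∃ A : Set Ω, MeasurableSet A ∧ α < (P A).toReal ∧ y = condExpEvent P X A}

/-- Conditional value-at-risk. -/
def CVaR (P : Measure Ω) (X : Ω → ℝ) (α : ℝ) : ℝ :=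
  sInf {y : ℝ | ∃ s : ℝ, y = (∫ ω, max (-(X ω - s)) 0 ∂P) / α - s}

/-- Modified indicator 1^{(α)}_{X ≤ x}. -/
def modInd (P : Measure Ω) (X : Ω → ℝ) (α x : ℝ) (ω : Ω) : ℝ :=
  if P {a | X a = x} = 0 then Set.indicator {a | X a ≤ x} (fun _ => (1 : ℝ)) ω
  else Set.indicator {a | X a ≤ x} (fun _ => (1 : ℝ)) ω
    + ((α - (P {a | X a ≤ x}).toReal) / (P {a | X a = x}).toReal)
      * Set.indicator {a | X a = x} (fun _ => (1 : ℝ)) ω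

/-- Sum of the k smallest entries of (X 0 ω, ..., X (n-1) ω). -/
def tailSum (Xs : ℕ → Ω → ℝ) (n k : ℕ) (ω : Ω) : ℝ :=
  ((List.insertionSort (· ≤ ·) (List.ofFn fun i : Fin n => Xs i ω)).take k).sum


/-! Let `F` be the distribution function of `X` and `q` its lower `α`-quantile, so that
`F y < α ≤ F q` for `y < q`. Given `n` reals, `N` of them `≤ q`, the sum `S` of the `k` smallest
exceeds `∑_{uᵢ ≤ q} uᵢ + (k - N) q` by a nonnegative amount carried by the entries in sorted
positions between `N` and `k`: they lie in `(q, y₂]` if `N ≤ k ≤ #{i | uᵢ ≤ y₂}`, and in `(y₁, q]`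
if `#{i | uᵢ ≤ y₁} ≤ k ≤ N`. For the sample, `k / n → α` and the strong law gives
`#{i | uᵢ ≤ y} / n → F y`, so for `y₁ < q` and `F y₂ > α` the excess is eventually at most
`(k - N)⁺ (y₂ - q) + n (q - y₁)`, where `(k - N)⁺ / n → (α - F q)⁺ = 0`. Letting `y₁ ↑ q`,
`S / n → E[X; X ≤ q] + q (α - F q) = α TM_α(X)`. -/

open Set Topology

namespace List

theorem sum_map_indicator_Iic_one (l : List ℝ) (y : ℝ) :
    (l.map ((Iic y).indicator 1)).sum = (l.countP (· ≤ y) : ℝ) := by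
  induction l with
  | nil => simp
  | cons a t ih => by_cases h : a ≤ y <;> simp [indicator, h, ih, add_comm]

theorem sum_map_indicator_Iic_id (l : List ℝ) (y : ℝ) :
    (l.map ((Iic y).indicator id)).sum = (l.filter (· ≤ y)).sum := by
  induction l with
  | nil => simp
  | cons a t ih => by_cases h : a ≤ y <;> simp [indicator, h, ih]

theorem sum_take_sub_sum_take (l : List ℝ) {a b : ℕ} (hab : a ≤ b) :
    (l.take b).sum - (l.take a).sum = ((l.take b).drop a).sum := by
  have : l.take a = (l.take b).take a := by rw [take_take, min_eq_left hab]
  rw [this, sub_eq_iff_eq_add', ← sum_append, take_append_drop]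

variable {l : List ℝ}

theorem Pairwise.take_countP_le (hl : l.Pairwise (· ≤ ·)) (y : ℝ) :
    l.take (l.countP (· ≤ y)) = l.filter (· ≤ y) := by
  induction l with
  | nil => simp
  | cons a t ih =>
    rw [pairwise_cons] at hl
    by_cases h : a ≤ y
    · simp [h, ih hl.2]
    · have hgt : ∀ b ∈ t, ¬ b ≤ y := fun b hb hby => h ((hl.1 b hb).trans hby)
      have hc : t.countP (· ≤ y) = 0 := countP_eq_zero.2 (by simpa using hgt)
      have hf : t.filter (· ≤ y) = [] := filter_eq_nil_iff.2 (by simpa using hgt)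
      simp [h, hc, hf]

theorem Pairwise.drop_countP_le (hl : l.Pairwise (· ≤ ·)) (y : ℝ) :
    l.drop (l.countP (· ≤ y)) = l.filter (y < ·) := by
  induction l with
  | nil => simp
  | cons a t ih =>
    rw [pairwise_cons] at hl
    by_cases h : a ≤ y
    · simp [h, ih hl.2]
    · have hgt : ∀ b ∈ t, ¬ b ≤ y := fun b hb hby => h ((hl.1 b hb).trans hby)
      have hc : t.countP (· ≤ y) = 0 := countP_eq_zero.2 (by simpa using hgt)
      have hf : (a :: t).filter (y < ·) = a :: t :=
        filter_eq_self.2 (by simpa [not_le.1 h] using hgt)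
      simp [h, hc, hf]

theorem Pairwise.le_of_mem_take (hl : l.Pairwise (· ≤ ·)) {v t : ℝ} {b : ℕ}
    (hb : b ≤ l.countP (· ≤ v)) (ht : t ∈ l.take b) : t ≤ v := by
  rw [← min_eq_left hb, ← take_take, hl.take_countP_le] at ht
  simpa using of_mem_filter (take_subset _ _ ht)

theorem Pairwise.lt_of_mem_drop (hl : l.Pairwise (· ≤ ·)) {u t : ℝ} {a : ℕ}
    (ha : l.countP (· ≤ u) ≤ a) (ht : t ∈ l.drop a) : u < t := by
  rw [← Nat.add_sub_cancel' ha, ← drop_drop, hl.drop_countP_le] at ht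
  simpa using of_mem_filter (drop_subset _ _ ht)

theorem Pairwise.mul_le_sum_take_sub_sum_take (hl : l.Pairwise (· ≤ ·)) {u : ℝ} {a b : ℕ}
    (hab : a ≤ b) (hb : b ≤ l.length) (hu : l.countP (· ≤ u) ≤ a) :
    (b - a : ℝ) * u ≤ (l.take b).sum - (l.take a).sum := by
  have hlen : (((l.take b).drop a).length : ℝ) = b - a := by
    simp [Nat.cast_sub hab, min_eq_left hb]
  have hmem : ∀ t ∈ (l.take b).drop a, u ≤ t := fun t ht =>
    (hl.lt_of_mem_drop hu (by rw [drop_take] at ht; exact take_subset _ _ ht)).le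
  have h := card_nsmul_le_sum _ u hmem
  rwa [nsmul_eq_mul, hlen, ← sum_take_sub_sum_take l hab] at h

theorem Pairwise.sum_take_sub_sum_take_le_mul (hl : l.Pairwise (· ≤ ·)) {v : ℝ} {a b : ℕ}
    (hab : a ≤ b) (hv : b ≤ l.countP (· ≤ v)) :
    (l.take b).sum - (l.take a).sum ≤ (b - a : ℝ) * v := by
  have hlen : (((l.take b).drop a).length : ℝ) = b - a := by
    simp [Nat.cast_sub hab, min_eq_left (hv.trans countP_le_length)]
  have hmem : ∀ t ∈ (l.take b).drop a, t ≤ v := fun t ht =>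
    hl.le_of_mem_take hv (drop_subset _ _ ht)
  have h := sum_le_card_nsmul _ v hmem
  rwa [nsmul_eq_mul, hlen, ← sum_take_sub_sum_take l hab] at h

theorem Pairwise.sum_filter_add_mul_le_sum_take (hl : l.Pairwise (· ≤ ·)) {k : ℕ}
    (hk : k ≤ l.length) (y : ℝ) :
    (l.filter (· ≤ y)).sum + (k - l.countP (· ≤ y) : ℝ) * y ≤ (l.take k).sum := by
  rw [← hl.take_countP_le]
  rcases le_total (l.countP (· ≤ y)) k with h | h
  · linarith [hl.mul_le_sum_take_sub_sum_take h hk le_rfl]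
  · linarith [hl.sum_take_sub_sum_take_le_mul h le_rfl]

theorem Pairwise.sum_take_le_sum_filter_add (hl : l.Pairwise (· ≤ ·)) {y₁ y y₂ : ℝ} {k : ℕ}
    (hy : y₁ ≤ y) (h₁ : l.countP (· ≤ y₁) ≤ k) (h₂ : k ≤ l.countP (· ≤ y₂)) :
    (l.take k).sum ≤ (l.filter (· ≤ y)).sum + (k - l.countP (· ≤ y) : ℝ) * y
      + max (k - l.countP (· ≤ y) : ℝ) 0 * (y₂ - y) + l.length * (y - y₁) := by
  rw [← hl.take_countP_le]
  set N := l.countP (· ≤ y)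
  have hlen : 0 ≤ (l.length : ℝ) * (y - y₁) := by positivity [sub_nonneg.2 hy]
  rcases le_total N k with h | h
  · rw [max_eq_left (sub_nonneg.2 (Nat.cast_le.2 h))]
    linarith [hl.sum_take_sub_sum_take_le_mul h h₂]
  · rw [max_eq_right (sub_nonpos.2 (Nat.cast_le.2 h))]
    have hNk : (N - k : ℝ) ≤ l.length := by
      have : (N : ℝ) ≤ l.length := by exact_mod_cast countP_le_length
      linarith [k.cast_nonneg (α := ℝ)]
    linarith [hl.mul_le_sum_take_sub_sum_take h countP_le_length h₁,
      mul_le_mul_of_nonneg_right hNk (sub_nonneg.2 hy)]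

end List

-- `tailSum Xs n k ω` is definitionally `((orderStatistics (Xs · ω) n).take k).sum`.
def orderStatistics (u : ℕ → ℝ) (n : ℕ) : List ℝ :=
  (List.ofFn fun i : Fin n => u i).insertionSort (· ≤ ·)

section OrderStatistics

variable (u : ℕ → ℝ) (n : ℕ)

theorem pairwise_orderStatistics : (orderStatistics u n).Pairwise (· ≤ ·) :=
  List.pairwise_insertionSort _ _

theorem length_orderStatistics : (orderStatistics u n).length = n := by
  simp [orderStatistics]

theorem sum_map_orderStatistics (g : ℝ → ℝ) :
    ((orderStatistics u n).map g).sum = ∑ i ∈ Finset.range n, g (u i) := by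
  rw [orderStatistics, ((List.perm_insertionSort _ _).map g).sum_eq, List.map_ofFn, List.sum_ofFn]
  exact Fin.sum_univ_eq_sum_range (fun i => g (u i)) n

theorem countP_orderStatistics (y : ℝ) :
    ((orderStatistics u n).countP (· ≤ y) : ℝ)
      = ∑ i ∈ Finset.range n, (Iic y).indicator 1 (u i) := by
  rw [← sum_map_orderStatistics, List.sum_map_indicator_Iic_one]

theorem sum_filter_orderStatistics (y : ℝ) :
    ((orderStatistics u n).filter (· ≤ y)).sum
      = ∑ i ∈ Finset.range n, (Iic y).indicator id (u i) := by
  rw [← sum_map_orderStatistics, List.sum_map_indicator_Iic_id]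

end OrderStatistics

theorem eventually_le_of_tendsto_div {f g : ℕ → ℕ} {a b : ℝ}
    (hf : Tendsto (fun n => (f n : ℝ) / n) atTop (𝓝 a))
    (hg : Tendsto (fun n => (g n : ℝ) / n) atTop (𝓝 b)) (hab : a < b) :
    ∀ᶠ n in atTop, f n ≤ g n := by
  filter_upwards [hf.eventually_lt hg hab, eventually_gt_atTop 0] with n h hn
  exact_mod_cast ((div_lt_div_iff_of_pos_right (by positivity)).1 h).le

section EmpiricalTailMean

variable {u : ℕ → ℝ} {k : ℕ → ℕ} {F : ℝ → ℝ} {α q μ : ℝ}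

/-- Only the values of the empirical distribution function at `q` and at rational points are
needed, so that the hypothesis holds almost surely by the strong law. -/
theorem tendsto_sum_take_orderStatistics_sub_div (hF : Monotone F) (hFq : α ≤ F q)
    (hF_lt : ∀ y < q, F y < α) (hF_gt : ∃ y, α < F y)
    (hk : Tendsto (fun n => (k n : ℝ) / n) atTop (𝓝 α))
    (hcdf : ∀ y ∈ insert q (range ((↑) : ℚ → ℝ)),
      Tendsto (fun n => (∑ i ∈ Finset.range n, (Iic y).indicator (1 : ℝ → ℝ) (u i)) / n) atTop
        (𝓝 (F y))) :
    Tendsto (fun n => (((orderStatistics u n).take (k n)).sum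
      - ((orderStatistics u n).filter (· ≤ q)).sum
      - (k n - (orderStatistics u n).countP (· ≤ q)) * q) / n) atTop (𝓝 0) := by
  set L := orderStatistics u
  set N : ℝ → ℕ → ℝ := fun y n => ((L n).countP (· ≤ y) : ℝ)
  set G : ℕ → ℝ := fun n => ((L n).take (k n)).sum - ((L n).filter (· ≤ q)).sum - (k n - N q n) * q
  have hN : ∀ y ∈ insert q (range ((↑) : ℚ → ℝ)), Tendsto (fun n => N y n / n) atTop (𝓝 (F y)) :=
    fun y hy => by simpa only [N, L, countP_orderStatistics] using hcdf y hy
  obtain ⟨y, hy⟩ := hF_gt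
  obtain ⟨r₂, hr₂⟩ := exists_rat_gt (max y q)
  have hk_le : ∀ᶠ n in atTop, k n ≤ (L n).countP (· ≤ (r₂ : ℝ)) :=
    eventually_le_of_tendsto_div hk (hN _ (mem_insert_of_mem _ ⟨r₂, rfl⟩))
      (hy.trans_le (hF (le_max_left _ _ |>.trans hr₂.le)))
  change Tendsto (fun n => G n / n) atTop (𝓝 0)
  refine tendsto_order.2 ⟨fun ε hε => ?_, fun ε hε => ?_⟩
  · filter_upwards [hk_le] with n hn
    have := (pairwise_orderStatistics u n).sum_filter_add_mul_le_sum_take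
      (hn.trans List.countP_le_length) q
    exact hε.trans_le (div_nonneg (by simp only [G]; linarith) n.cast_nonneg)
  obtain ⟨r₁, hr₁⟩ := exists_rat_btwn (show q - ε / 2 < q by linarith)
  have hr₁_le : ∀ᶠ n in atTop, (L n).countP (· ≤ (r₁ : ℝ)) ≤ k n :=
    eventually_le_of_tendsto_div (hN _ (mem_insert_of_mem _ ⟨r₁, rfl⟩)) hk (hF_lt _ hr₁.2)
  have hexcess : Tendsto (fun n => max (k n / n - N q n / n) 0 * (r₂ - q)) atTop (𝓝 0) := by
    have := ((hk.sub (hN q (mem_insert _ _))).max (tendsto_const_nhds (x := 0))).mul_const (r₂ - q)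
    rwa [max_eq_right (sub_nonpos.2 hFq), zero_mul] at this
  filter_upwards [hk_le, hr₁_le, hexcess.eventually (eventually_lt_nhds (half_pos hε)),
    eventually_gt_atTop 0] with n h₂ h₁ hsmall hn
  have := (pairwise_orderStatistics u n).sum_take_le_sum_filter_add hr₁.2.le h₁ h₂
  rw [length_orderStatistics] at this
  calc G n / n ≤ (max (k n - N q n) 0 * (r₂ - q) + n * (q - r₁)) / n :=
        div_le_div_of_nonneg_right (by simp only [G]; linarith) n.cast_nonneg
    _ = max (k n / n - N q n / n) 0 * (r₂ - q) + (q - r₁) := by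
        rw [← sub_div, ← zero_div (n : ℝ), max_div_div_right n.cast_nonneg, zero_div]
        field_simp
    _ < ε := by linarith

theorem tendsto_sum_take_orderStatistics_div (hα : α ≠ 0) (hF : Monotone F) (hFq : α ≤ F q)
    (hF_lt : ∀ y < q, F y < α) (hF_gt : ∃ y, α < F y)
    (hk : Tendsto (fun n => (k n : ℝ) / n) atTop (𝓝 α))
    (hA : Tendsto (fun n => (∑ i ∈ Finset.range n, (Iic q).indicator id (u i)) / n) atTop (𝓝 μ))
    (hcdf : ∀ y ∈ insert q (range ((↑) : ℚ → ℝ)),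
      Tendsto (fun n => (∑ i ∈ Finset.range n, (Iic y).indicator (1 : ℝ → ℝ) (u i)) / n) atTop
        (𝓝 (F y))) :
    Tendsto (fun n => ((orderStatistics u n).take (k n)).sum / k n) atTop
      (𝓝 (α⁻¹ * (μ + q * (α - F q)))) := by
  simp only [← sum_filter_orderStatistics] at hA
  have hNq := hcdf q (mem_insert _ _)
  simp only [← countP_orderStatistics] at hNq
  have hSn : Tendsto (fun n => ((orderStatistics u n).take (k n)).sum / n) atTop
      (𝓝 (μ + q * (α - F q))) := by
    have := (hA.add ((hk.sub hNq).mul_const q)).add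
      (tendsto_sum_take_orderStatistics_sub_div hF hFq hF_lt hF_gt hk hcdf)
    rw [add_zero, mul_comm (α - F q)] at this
    exact this.congr fun n => by ring
  rw [inv_mul_eq_div]
  refine (hSn.div hk hα).congr' ?_
  filter_upwards [eventually_ne_atTop 0] with n hn
  exact div_div_div_cancel_right₀ (Nat.cast_ne_zero.2 hn) _ _

end EmpiricalTailMean

theorem Monotone.bddBelow_setOf_le {g : ℝ → ℝ} (hg : Monotone g) {α : ℝ} (h : ∃ x, g x < α) :
    BddBelow {x | α ≤ g x} := by
  obtain ⟨x₀, hx₀⟩ := h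
  exact ⟨x₀, fun s hs => le_of_not_gt fun hlt => (hx₀.trans_le' (hg hlt.le)).not_ge hs⟩

theorem Monotone.apply_lt_of_lt_sInf {g : ℝ → ℝ} (hg : Monotone g) {α y : ℝ} (h : ∃ x, g x < α)
    (hy : y < sInf {x | α ≤ g x}) : g y < α :=
  lt_of_not_ge fun hle => hy.not_ge (csInf_le (hg.bddBelow_setOf_le h) hle)

theorem StieltjesFunction.le_apply_sInf (f : StieltjesFunction ℝ) {α : ℝ} (hne : ∃ x, α ≤ f x)
    (hbdd : ∃ x, f x < α) : α ≤ f (sInf {x | α ≤ f x}) := by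
  set q := sInf {x | α ≤ f x}
  refine ge_of_tendsto ((f.right_continuous q).mono Ioi_subset_Ici_self)
    (eventually_nhdsWithin_of_forall fun x hx => ?_)
  obtain ⟨s, hs, hsx⟩ := (csInf_lt_iff (f.mono.bddBelow_setOf_le hbdd) hne).1 hx
  exact hs.trans (f.mono hsx.le)

theorem tendsto_nat_floor_natCast_mul_div {α : ℝ} (hα : 0 ≤ α) :
    Tendsto (fun n : ℕ => (⌊(n : ℝ) * α⌋₊ : ℝ) / n) atTop (𝓝 α) := by
  simpa only [Function.comp_def, mul_comm α] using
    (tendsto_nat_floor_mul_div_atTop hα).comp tendsto_natCast_atTop_atTop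

section RandomVariable

variable {P : Measure Ω} {X : Ω → ℝ}

theorem cdf_map_apply [IsProbabilityMeasure P] (hX : Measurable X) (x : ℝ) :
    cdf (P.map X) x = (P {ω | X ω ≤ x}).toReal := by
  have := Measure.isProbabilityMeasure_map (μ := P) hX.aemeasurable
  rw [cdf_eq_real, map_measureReal_apply hX measurableSet_Iic]
  rfl

theorem lowerQuantile_eq_sInf_cdf [IsProbabilityMeasure P] (hX : Measurable X) (α : ℝ) :
    lowerQuantile P X α = sInf {x | α ≤ cdf (P.map X) x} := by
  simp only [lowerQuantile, cdf_map_apply hX]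

theorem le_cdf_lowerQuantile [IsProbabilityMeasure P] (hX : Measurable X) {α : ℝ}
    (hα₀ : 0 < α) (hα₁ : α < 1) : α ≤ cdf (P.map X) (lowerQuantile P X α) := by
  have := Measure.isProbabilityMeasure_map (μ := P) hX.aemeasurable
  rw [lowerQuantile_eq_sInf_cdf hX]
  exact (cdf _).le_apply_sInf
    (((tendsto_cdf_atTop _).eventually (eventually_gt_nhds hα₁)).exists.imp fun _ => le_of_lt)
    ((tendsto_cdf_atBot _).eventually (eventually_lt_nhds hα₀)).exists

theorem cdf_lt_of_lt_lowerQuantile [IsProbabilityMeasure P] (hX : Measurable X) {α y : ℝ}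
    (hα₀ : 0 < α) (hy : y < lowerQuantile P X α) : cdf (P.map X) y < α := by
  have := Measure.isProbabilityMeasure_map (μ := P) hX.aemeasurable
  rw [lowerQuantile_eq_sInf_cdf hX] at hy
  exact (monotone_cdf _).apply_lt_of_lt_sInf
    ((tendsto_cdf_atBot _).eventually (eventually_lt_nhds hα₀)).exists hy

theorem integral_indicator_Iic_comp (hX : Measurable X) (g : ℝ → ℝ) (y : ℝ) :
    ∫ ω, (Iic y).indicator g (X ω) ∂P = ∫ ω in {ω | X ω ≤ y}, g (X ω) ∂P := by
  change _ = ∫ ω in X ⁻¹' Iic y, g (X ω) ∂P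
  rw [← integral_indicator (hX measurableSet_Iic)]
  exact integral_congr_ae (ae_of_all _ fun ω => (indicator_comp_right X).symm)

theorem integrable_indicator_Iic_comp [IsFiniteMeasure P] (hX : Measurable X)
    (hXint : Integrable (fun ω => max (-(X ω)) 0) P) (y : ℝ) :
    Integrable (fun ω => (Iic y).indicator id (X ω)) P := by
  refine (hXint.add (integrable_const |y|)).mono'
    ((measurable_id.indicator measurableSet_Iic).comp hX).aestronglyMeasurable
    (ae_of_all _ fun ω => ?_)
  by_cases h : X ω ≤ y
  · simp only [indicator_of_mem (show X ω ∈ Iic y from h), id, Real.norm_eq_abs, abs_le,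
      Pi.add_apply]
    constructor <;> linarith [le_max_left (-X ω) 0, le_max_right (-X ω) 0, le_abs_self y,
      abs_nonneg y]
  · simp only [indicator_of_notMem (show X ω ∉ Iic y from h), norm_zero, Pi.add_apply]
    positivity

variable {Xs : ℕ → Ω → ℝ}

theorem ae_tendsto_sum_comp_div (hindep : Pairwise fun i j => IndepFun (Xs i) (Xs j) P)
    (hident : ∀ i, IdentDistrib (Xs i) X P P) {h : ℝ → ℝ} (hh : Measurable h)
    (hint : Integrable (fun ω => h (X ω)) P) :
    ∀ᵐ ω ∂P, Tendsto (fun n : ℕ => (∑ i ∈ Finset.range n, h (Xs i ω)) / n) atTop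
      (𝓝 (∫ ω, h (X ω) ∂P)) := by
  have h₀ : IdentDistrib (fun ω => h (Xs 0 ω)) (fun ω => h (X ω)) P P := (hident 0).comp hh
  have := strong_law_ae_real (fun i ω => h (Xs i ω)) (h₀.integrable_iff.2 hint)
    (fun i j hij => (hindep hij).comp hh hh) fun i => ((hident i).trans (hident 0).symm).comp hh
  rwa [h₀.integral_eq] at this

theorem ae_tendsto_empiricalCDF [IsProbabilityMeasure P] (hX : Measurable X)
    (hindep : Pairwise fun i j => IndepFun (Xs i) (Xs j) P)
    (hident : ∀ i, IdentDistrib (Xs i) X P P) {S : Set ℝ} (hS : S.Countable) :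
    ∀ᵐ ω ∂P, ∀ y ∈ S, Tendsto
      (fun n : ℕ => (∑ i ∈ Finset.range n, (Iic y).indicator (1 : ℝ → ℝ) (Xs i ω)) / n) atTop
      (𝓝 (cdf (P.map X) y)) := by
  refine (ae_ball_iff hS).2 fun y _ => ?_
  have hint : Integrable (fun ω => (Iic y).indicator (1 : ℝ → ℝ) (X ω)) P :=
    .of_bound ((measurable_const.indicator measurableSet_Iic).comp hX).aestronglyMeasurable 1
      (ae_of_all _ fun ω => by by_cases h : X ω ≤ y <;> simp [indicator, h])
  have := ae_tendsto_sum_comp_div hindep hident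
    (measurable_const.indicator measurableSet_Iic : Measurable ((Iic y).indicator 1)) hint
  simpa [integral_indicator_Iic_comp hX, cdf_map_apply hX, Measure.real] using this

end RandomVariable

/-- Tail strong law of large numbers: the average of the ⌊nα⌋ smallest
order statistics converges almost surely to the α-tail mean. -/
theorem tail_slln (P : Measure Ω) [IsProbabilityMeasure P] (α : ℝ)
    (hα : α ∈ Set.Ioo (0:ℝ) 1)
    (X : Ω → ℝ) (hX : Measurable X)
    (hXint : Integrable (fun ω => max (-(X ω)) 0) P)
    (Xs : ℕ → Ω → ℝ) (hXs : ∀ n, Measurable (Xs n))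
    (hindep : iIndepFun Xs P)
    (hident : ∀ n, Measure.map (Xs n) P = Measure.map X P) :
    ∀ᵐ ω ∂P, Tendsto
      (fun n : ℕ => tailSum Xs n ⌊(n : ℝ) * α⌋₊ ω / (⌊(n : ℝ) * α⌋₊ : ℝ))
      atTop (nhds (tailMean P X α)) := by
  obtain ⟨hα₀, hα₁⟩ := hα
  have hμ : ∀ y, ∫ ω in {ω | X ω ≤ y}, X ω ∂P = ∫ ω, (Iic y).indicator id (X ω) ∂P :=
    fun y => (integral_indicator_Iic_comp hX id y).symm
  rw [tailMean, hμ, ← cdf_map_apply hX]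
  have hid : ∀ i, IdentDistrib (Xs i) X P P :=
    fun i => ⟨(hXs i).aemeasurable, hX.aemeasurable, hident i⟩
  have hpair : Pairwise fun i j => IndepFun (Xs i) (Xs j) P := fun i j hij => hindep.indepFun hij
  have := Measure.isProbabilityMeasure_map (μ := P) hX.aemeasurable
  obtain ⟨y, hy⟩ := ((tendsto_cdf_atTop (P.map X)).eventually (eventually_gt_nhds hα₁)).exists
  set q := lowerQuantile P X α
  filter_upwards [ae_tendsto_sum_comp_div hpair hid (measurable_id.indicator measurableSet_Iic)
      (integrable_indicator_Iic_comp hX hXint q),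
    ae_tendsto_empiricalCDF hX hpair hid ((countable_range ((↑) : ℚ → ℝ)).insert q)]
    with ω hA hcdf
  exact tendsto_sum_take_orderStatistics_div (u := (Xs · ω)) hα₀.ne' (monotone_cdf _)
    (le_cdf_lowerQuantile hX hα₀ hα₁) (fun _ => cdf_lt_of_lt_lowerQuantile hX hα₀) ⟨y, hy⟩
    (tendsto_nat_floor_natCast_mul_div hα₀.le) hA hcdf
end
end

section
/- Let X be an integrable real-valued random variable on a probability space (Ω,𝒜,P) and let α ∈ (0,1) be fixed. Then the Expected Shortfall equals the conditional value-at-risk: ES_α(X) = CVaR^α(X) = inf{ E[(X − s)⁻]/α − s : s ∈ ℝ }. -/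
/-!
Write `q` for the lower `α`-quantile of `X`. The function `s ↦ E[(s - X)⁺] - α s` is convex with
left and right slopes `P[X < s] - α` and `P[X ≤ s] - α` at `s`, so it is minimised at `q`, where
`P[X < q] ≤ α ≤ P[X ≤ q]`. Its minimum `q P[X ≤ q] - E[X; X ≤ q] - α q` is `-α TM_α(X)`.
-/

open MeasureTheory ProbabilityTheory Filter
open scoped Classical

noncomputable section

variable {Ω : Type*} [MeasurableSpace Ω]

open Set Function

namespace ProbabilityTheory

variable {μ : Measure ℝ} {α : ℝ}

lemma bddBelow_setOf_le_cdf (hα : 0 < α) : BddBelow {x | α ≤ cdf μ x} := by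
  obtain ⟨b, hb⟩ := ((tendsto_order.1 (tendsto_cdf_atBot μ)).2 α hα).exists_forall_of_atBot
  exact ⟨b, fun x hx => le_of_not_gt fun hxb => (hb x hxb.le).not_ge hx⟩

lemma nonempty_setOf_le_cdf (hα : α < 1) : {x | α ≤ cdf μ x}.Nonempty :=
  ((tendsto_order.1 (tendsto_cdf_atTop μ)).1 α hα).exists.imp fun _ => le_of_lt

lemma le_cdf_sInf_setOf_le_cdf (hα : α < 1) : α ≤ cdf μ (sInf {x | α ≤ cdf μ x}) := by
  refine ge_of_tendsto (((cdf μ).right_continuous _).mono Ioi_subset_Ici_self)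
    (eventually_nhdsWithin_of_forall fun x hx => ?_)
  obtain ⟨s, hs, hsx⟩ := exists_lt_of_csInf_lt (nonempty_setOf_le_cdf hα) hx
  exact hs.trans (monotone_cdf μ hsx.le)

lemma leftLim_cdf_sInf_setOf_le_cdf_le (hα : 0 < α) :
    leftLim (cdf μ) (sInf {x | α ≤ cdf μ x}) ≤ α := by
  refine le_of_tendsto ((monotone_cdf μ).tendsto_leftLim _)
    (eventually_nhdsWithin_of_forall fun x hx => ?_)
  have hxS : x ∉ {x | α ≤ cdf μ x} := notMem_of_lt_csInf hx (bddBelow_setOf_le_cdf hα)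
  exact (not_le.1 hxS).le

lemma measureReal_Iio_eq_leftLim_cdf [IsProbabilityMeasure μ] (x : ℝ) :
    μ.real (Iio x) = leftLim (cdf μ) x := by
  have hsingleton : μ.real {x} = cdf μ x - leftLim (cdf μ) x := by
    have h := (cdf μ).measure_singleton x
    rw [measure_cdf] at h
    rw [measureReal_def, h,
      ENNReal.toReal_ofReal (sub_nonneg.2 ((monotone_cdf μ).leftLim_le le_rfl))]
  rw [← Iic_sdiff_right, measureReal_sdiff (singleton_subset_iff.2 self_mem_Iic)
    (measurableSet_singleton x), ← cdf_eq_real, hsingleton, sub_sub_cancel]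

end ProbabilityTheory

section Quantile

variable {P : Measure Ω} [IsProbabilityMeasure P] {X : Ω → ℝ} {α : ℝ}

lemma measureReal_le_eq_cdf_map (hX : Measurable X) (x : ℝ) :
    P.real {ω | X ω ≤ x} = cdf (P.map X) x := by
  have := Measure.isProbabilityMeasure_map (μ := P) hX.aemeasurable
  rw [cdf_eq_real, map_measureReal_apply hX measurableSet_Iic]
  rfl

lemma measureReal_lt_eq_leftLim_cdf_map (hX : Measurable X) (x : ℝ) :
    P.real {ω | X ω < x} = leftLim (cdf (P.map X)) x := by
  have := Measure.isProbabilityMeasure_map (μ := P) hX.aemeasurable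
  rw [← measureReal_Iio_eq_leftLim_cdf, map_measureReal_apply hX measurableSet_Iio]
  rfl

lemma lowerQuantile_eq_sInf_cdf_map (hX : Measurable X) :
    lowerQuantile P X α = sInf {x | α ≤ cdf (P.map X) x} := by
  simp only [lowerQuantile, ← measureReal_def, measureReal_le_eq_cdf_map hX]

lemma le_measureReal_le_lowerQuantile (hX : Measurable X) (hα : α < 1) :
    α ≤ P.real {ω | X ω ≤ lowerQuantile P X α} := by
  rw [measureReal_le_eq_cdf_map hX, lowerQuantile_eq_sInf_cdf_map hX]
  exact le_cdf_sInf_setOf_le_cdf hα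

lemma measureReal_lt_lowerQuantile_le (hX : Measurable X) (hα : 0 < α) :
    P.real {ω | X ω < lowerQuantile P X α} ≤ α := by
  rw [measureReal_lt_eq_leftLim_cdf_map hX, lowerQuantile_eq_sInf_cdf_map hX]
  exact leftLim_cdf_sInf_setOf_le_cdf_le hα

end Quantile

section ShortfallObjective

variable {P : Measure Ω} [IsFiniteMeasure P] {X : Ω → ℝ}

lemma integral_max_sub_eq (hX : Measurable X) (hXint : Integrable X P) (q : ℝ) :
    ∫ ω, max (q - X ω) 0 ∂P = q * P.real {ω | X ω ≤ q} - ∫ ω in {ω | X ω ≤ q}, X ω ∂P := by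
  have hA : MeasurableSet {ω | X ω ≤ q} := hX measurableSet_Iic
  have hmax : (fun ω => max (q - X ω) 0) = {ω | X ω ≤ q}.indicator (fun ω => q - X ω) := by
    ext ω
    by_cases h : X ω ≤ q
    · simp [h]
    · simp [h, (not_le.1 h).le]
  rw [hmax, integral_indicator hA, integral_sub (integrable_const q) hXint.integrableOn,
    setIntegral_const, smul_eq_mul, mul_comm]

lemma integral_max_sub_add_le (hXint : Integrable X P) {A : Set Ω} (hA : MeasurableSet A)
    {q : ℝ} (hlt : {ω | X ω < q} ⊆ A) (hle : A ⊆ {ω | X ω ≤ q}) (s : ℝ) :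
    ∫ ω, max (q - X ω) 0 ∂P + (s - q) * P.real A ≤ ∫ ω, max (s - X ω) 0 ∂P := by
  have hint : ∀ t : ℝ, Integrable (fun ω => max (t - X ω) 0) P :=
    fun t => ((integrable_const t).sub hXint).pos_part
  have hpt : ∀ ω, max (q - X ω) 0 + A.indicator (fun _ => s - q) ω ≤ max (s - X ω) 0 := by
    intro ω
    by_cases hω : ω ∈ A
    · rw [indicator_of_mem hω, max_eq_left (sub_nonneg.2 (hle hω))]
      linarith [le_max_left (s - X ω) 0]
    · rw [indicator_of_notMem hω, add_zero,
        max_eq_right (sub_nonpos.2 (not_lt.1 fun h => hω (hlt h)))]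
      exact le_max_right _ _
  rw [mul_comm, ← smul_eq_mul, ← integral_indicator_const _ hA,
    ← integral_add (hint q) ((integrable_const _).indicator hA)]
  exact integral_mono ((hint q).add ((integrable_const _).indicator hA)) (hint s) hpt

lemma integral_max_sub_sub_mul_le (hX : Measurable X) (hXint : Integrable X P) {α q : ℝ}
    (hle : α ≤ P.real {ω | X ω ≤ q}) (hlt : P.real {ω | X ω < q} ≤ α) (s : ℝ) :
    ∫ ω, max (q - X ω) 0 ∂P - α * q ≤ ∫ ω, max (s - X ω) 0 ∂P - α * s := by
  rcases le_total q s with hqs | hsq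
  · have := integral_max_sub_add_le (A := {ω | X ω ≤ q}) hXint (hX measurableSet_Iic)
      (ofPred_subset_ofPred.2 fun _ => le_of_lt) subset_rfl s
    linarith [mul_le_mul_of_nonneg_left hle (sub_nonneg.2 hqs)]
  · have := integral_max_sub_add_le (A := {ω | X ω < q}) hXint (hX measurableSet_Iio)
      subset_rfl (ofPred_subset_ofPred.2 fun _ => le_of_lt) s
    linarith [mul_le_mul_of_nonpos_left hlt (sub_nonpos.2 hsq)]

lemma ES_eq_integral_max_sub (hX : Measurable X) (hXint : Integrable X P) {α : ℝ} (hα : α ≠ 0) :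
    ES P X α = (∫ ω, max (lowerQuantile P X α - X ω) 0 ∂P) / α - lowerQuantile P X α := by
  rw [ES, tailMean, integral_max_sub_eq hX hXint, measureReal_def]
  field_simp
  ring

end ShortfallObjective

/-- Expected Shortfall coincides with conditional value-at-risk. -/
theorem es_eq_cvar (P : Measure Ω) [IsProbabilityMeasure P] (α : ℝ)
    (hα : α ∈ Set.Ioo (0:ℝ) 1)
    (X : Ω → ℝ) (hX : Measurable X) (hXint : Integrable X P) :
    ES P X α = CVaR P X α ∧
    CVaR P X α = sInf {y : ℝ | ∃ s : ℝ, y = (∫ ω, max (-(X ω - s)) 0 ∂P) / α - s} := by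
  obtain ⟨hα0, hα1⟩ := hα
  set q := lowerQuantile P X α
  have hmin : ∀ s : ℝ,
      (∫ ω, max (q - X ω) 0 ∂P) / α - q ≤ (∫ ω, max (s - X ω) 0 ∂P) / α - s := fun s => by
    have := integral_max_sub_sub_mul_le hX hXint (le_measureReal_le_lowerQuantile hX hα1)
      (measureReal_lt_lowerQuantile_le hX hα0) s
    rw [div_sub' hα0.ne', div_sub' hα0.ne']
    gcongr
  refine ⟨?_, rfl⟩
  simp only [CVaR, neg_sub]
  rw [ES_eq_integral_max_sub hX hXint hα0.ne']
  refine Eq.symm (IsLeast.csInf_eq ⟨⟨q, rfl⟩, ?_⟩)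
  rintro _ ⟨s, rfl⟩
  exact hmin s

end
end

section
/- Let α ∈ (0,1) and let X be a real-valued random variable on a probability space (Ω,𝒜,P) with E[X⁻] < ∞. Then the upper tail conditional expectation, lower tail conditional expectation, and Expected Shortfall are ordered: TCE^α(X) ≤ TCE_α(X) ≤ ES_α(X). -/
open MeasureTheory ProbabilityTheory Filter
open scoped Classical

noncomputable section

variable {Ω : Type*} [MeasurableSpace Ω]

open Set
open scoped Topology

/-! Let `q ≤ q'` be the lower and upper `α`-quantiles and `A = {X ≤ q} ⊆ A' = {X ≤ q'}`.
Right-continuity of the distribution function gives `α ≤ P[A]`. Since `X ≤ q` on `A` and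
`X > q` on `A' \ A`, enlarging `A` to `A'` can only raise the conditional mean, which is the first
inequality. The tail mean removes the excess mass `P[A] - α` at level `q`, which bounds every value
taken on `A`, so it is at most the conditional mean on `A`: this is the second inequality. -/

theorem StieltjesFunction.le_apply_csInf (f : StieltjesFunction ℝ) {α : ℝ}
    (hne : {x | α ≤ f x}.Nonempty) :
    α ≤ f (sInf {x | α ≤ f x}) := by
  have htendsto : Tendsto f (𝓝[>] sInf {x | α ≤ f x}) (𝓝 (f (sInf {x | α ≤ f x}))) :=
    (f.right_continuous _).mono Ioi_subset_Ici_self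
  refine ge_of_tendsto htendsto (eventually_nhdsWithin_of_forall fun y hy => ?_)
  obtain ⟨x, hx, hxy⟩ := exists_lt_of_csInf_lt hne hy
  exact hx.trans (f.mono hxy.le)

section Cdf

variable (μ : Measure ℝ)

theorem bddBelow_setOf_le_cdf {α : ℝ} (hα : 0 < α) : BddBelow {x | α ≤ cdf μ x} := by
  obtain ⟨x₀, hx₀⟩ :=
    ((tendsto_cdf_atBot μ).eventually (eventually_lt_nhds hα)).exists_forall_of_atBot
  refine ⟨x₀, fun y hy => le_of_not_gt fun hyx => ?_⟩
  exact (hx₀ y hyx.le).not_ge hy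

theorem exists_lt_cdf {α : ℝ} (hα : α < 1) : ∃ x, α < cdf μ x :=
  ((tendsto_cdf_atTop μ).eventually (eventually_gt_nhds hα)).exists

end Cdf

section Quantile

variable {P : Measure Ω} [IsProbabilityMeasure P] {X : Ω → ℝ}

theorem toReal_measure_le_eq_cdf_map (hX : Measurable X) (x : ℝ) :
    (P {ω | X ω ≤ x}).toReal = cdf (P.map X) x := by
  have := Measure.isProbabilityMeasure_map (μ := P) hX.aemeasurable
  rw [cdf_eq_real, measureReal_def, Measure.map_apply hX measurableSet_Iic]
  rfl

theorem le_toReal_measure_le_lowerQuantile (hX : Measurable X) {α : ℝ} (hα : α < 1) :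
    α ≤ (P {ω | X ω ≤ lowerQuantile P X α}).toReal := by
  simp only [lowerQuantile, toReal_measure_le_eq_cdf_map hX]
  obtain ⟨x, hx⟩ := exists_lt_cdf (P.map X) hα
  exact (cdf (P.map X)).le_apply_csInf ⟨x, hx.le⟩

theorem lowerQuantile_le_upperQuantile (hX : Measurable X) {α : ℝ} (hα : α ∈ Ioo (0 : ℝ) 1) :
    lowerQuantile P X α ≤ upperQuantile P X α := by
  simp only [lowerQuantile, upperQuantile, toReal_measure_le_eq_cdf_map hX]
  obtain ⟨x, hx⟩ := exists_lt_cdf (P.map X) hα.2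
  exact csInf_le_csInf (bddBelow_setOf_le_cdf _ hα.1) ⟨x, hx⟩ fun _ (hy : α < _) => hy.le

end Quantile

section CondExpEvent

variable {μ : Measure Ω} [IsFiniteMeasure μ] {X : Ω → ℝ}

theorem integrableOn_setOf_le_of_integrable_negPart (hX : Measurable X)
    (hneg : Integrable (fun ω => max (-(X ω)) 0) μ) (c : ℝ) :
    IntegrableOn X {ω | X ω ≤ c} μ := by
  refine Integrable.mono' ((integrable_const (max c 0)).add hneg).restrict
    hX.aestronglyMeasurable.restrict
    (ae_restrict_of_forall_mem (hX measurableSet_Iic) fun ω (hω : X ω ≤ c) => ?_)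
  rw [Real.norm_eq_abs, abs_le]
  constructor <;> simp only [Pi.add_apply] <;>
    linarith [le_max_left c 0, le_max_right c 0, le_max_left (-(X ω)) 0, le_max_right (-(X ω)) 0]

theorem setIntegral_le_mul_measureReal {A : Set Ω} {c : ℝ} (hA : MeasurableSet A)
    (hXA : IntegrableOn X A μ) (hle : ∀ ω ∈ A, X ω ≤ c) :
    ∫ ω in A, X ω ∂μ ≤ c * μ.real A := by
  calc ∫ ω in A, X ω ∂μ ≤ ∫ _ in A, c ∂μ := setIntegral_mono_on hXA integrableOn_const hA hle
    _ = c * μ.real A := by rw [setIntegral_const, smul_eq_mul, mul_comm]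

theorem condExpEvent_le_of_subset {A B : Set Ω} {c : ℝ} (hAB : A ⊆ B) (hA : MeasurableSet A)
    (hB : MeasurableSet B) (hXB : IntegrableOn X B μ) (hle : ∀ ω ∈ A, X ω ≤ c)
    (hge : ∀ ω ∈ B \ A, c ≤ X ω) (hμA : 0 < μ.real A) :
    condExpEvent μ X A ≤ condExpEvent μ X B := by
  have hXA : IntegrableOn X A μ := hXB.mono_set hAB
  have hint : ∫ ω in B, X ω ∂μ = (∫ ω in A, X ω ∂μ) + ∫ ω in B \ A, X ω ∂μ := by
    conv_lhs => rw [← union_sdiff_cancel hAB]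
    exact setIntegral_union disjoint_sdiff_right (hB.diff hA) hXA (hXB.mono_set sdiff_subset)
  have hmeas : μ.real B = μ.real A + μ.real (B \ A) := by
    rw [← measureReal_union disjoint_sdiff_right (hB.diff hA), union_sdiff_cancel hAB]
  have hintA := setIntegral_le_mul_measureReal hA hXA hle
  have hintD := setIntegral_ge_of_const_le_real (hB.diff hA) (measure_ne_top μ _) hge
    (hXB.mono_set sdiff_subset)
  have hμD : 0 ≤ μ.real (B \ A) := measureReal_nonneg
  change _ / μ.real A ≤ _ / μ.real B
  rw [hint, hmeas, div_le_div_iff₀ hμA (by linarith)]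
  nlinarith [mul_le_mul_of_nonneg_right hintA hμD, mul_le_mul_of_nonneg_right hintD hμA.le]

theorem inv_mul_setIntegral_add_le_condExpEvent {A : Set Ω} {c α : ℝ} (hA : MeasurableSet A)
    (hXA : IntegrableOn X A μ) (hle : ∀ ω ∈ A, X ω ≤ c) (hα : 0 < α) (hαA : α ≤ μ.real A) :
    α⁻¹ * ((∫ ω in A, X ω ∂μ) + c * (α - μ.real A)) ≤ condExpEvent μ X A := by
  have hintA := setIntegral_le_mul_measureReal hA hXA hle
  change _ ≤ _ / μ.real A
  rw [inv_mul_eq_div, div_le_div_iff₀ hα (hα.trans_le hαA)]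
  nlinarith [mul_le_mul_of_nonneg_left hintA (sub_nonneg.2 hαA)]

end CondExpEvent

/-- TCE^α ≤ TCE_α ≤ ES_α. -/
theorem tce_le_es (P : Measure Ω) [IsProbabilityMeasure P] (α : ℝ)
    (hα : α ∈ Set.Ioo (0:ℝ) 1)
    (X : Ω → ℝ) (hX : Measurable X)
    (hXint : Integrable (fun ω => max (-(X ω)) 0) P) :
    TCEup P X α ≤ TCElow P X α ∧ TCElow P X α ≤ ES P X α := by
  set q := lowerQuantile P X α
  have hA : MeasurableSet {ω | X ω ≤ q} := hX measurableSet_Iic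
  have hαA : α ≤ P.real {ω | X ω ≤ q} := le_toReal_measure_le_lowerQuantile hX hα.2
  have hint := integrableOn_setOf_le_of_integrable_negPart hX hXint
  refine ⟨neg_le_neg ?_, neg_le_neg ?_⟩
  · exact condExpEvent_le_of_subset
      (fun ω (h : X ω ≤ q) => h.trans (lowerQuantile_le_upperQuantile hX hα)) hA
      (hX measurableSet_Iic) (hint _) (fun _ h => h) (fun ω hω => (not_le.1 hω.2).le)
      (hα.1.trans_le hαA)
  · exact inv_mul_setIntegral_add_le_condExpEvent hA (hint q) (fun _ h => h) hα.1 hαA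

end
end
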